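/- Let G be a group with elements A_{ji}, A_{nl}, A_{ni}, A_{nj} satisfying: (i) A_{ji} A_{nl} A_{ni} = A_{ni} A_{ji} A_{nl} = A_{nl} A_{ni} A_{ji} and (ii) the commutator relation [A_{nl} A_{nj} A_{nl}⁻¹, A_{ji}] = 1, together with the relations A_{ji} A_{nj} A_{ji}⁻¹ expressible via conjugation. Then A_{ji} A_{nj} A_{ji}⁻¹ = A_{ni}⁻¹ A_{nl}⁻¹ A_{ni} A_{nl} A_{nj} A_{nl}⁻¹ A_{ni}⁻¹ A_{nl} A_{ni}. -/
import Mathlib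


/-- Relation (3)(a) of Lemma 4.20: if elements `Aji, Ani, Anj, Anl` of a group satisfy
the cyclic relations `Aji Anl Ani = Ani Aji Anl = Anl Ani Aji` (equation (4.21)), the
cyclic relations `Ani Aji Anj = Anj Ani Aji` (the conjugation relation for `Aji Anj Aji⁻¹`),
and the commutator relation `[Anl Anj Anl⁻¹, Aji] = 1`, then
`Aji Anj Aji⁻¹ = Ani⁻¹ Anl⁻¹ Ani Anl Anj Anl⁻¹ Ani⁻¹ Anl Ani`. -/
theorem conj_formula_3a
    (G : Type*) [Group G] (Aji Ani Anj Anl : G)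
    (h1 : Aji * Anl * Ani = Ani * Aji * Anl) (h2 : Ani * Aji * Anl = Anl * Ani * Aji)
    (h3 : Ani * Aji * Anj = Anj * Ani * Aji)
    (hcomm : (Anl * Anj * Anl⁻¹) * Aji = Aji * (Anl * Anj * Anl⁻¹)) :
    Aji * Anj * Aji⁻¹ =
      Ani⁻¹ * Anl⁻¹ * Ani * Anl * Anj * Anl⁻¹ * Ani⁻¹ * Anl * Ani := by
  -- Conjugation by `Aji` sends `Anl` to `Ani⁻¹ * Anl * Ani` (from h2).
  have e2 : Aji * Anl * Aji⁻¹ = Ani⁻¹ * Anl * Ani := by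
    calc Aji * Anl * Aji⁻¹ = Ani⁻¹ * (Ani * Aji * Anl) * Aji⁻¹ := by group
      _ = Ani⁻¹ * (Anl * Ani * Aji) * Aji⁻¹ := by rw [h2]
      _ = Ani⁻¹ * Anl * Ani := by group
  -- Conjugation by `Aji` sends `Anj` to `Ani⁻¹ * Anj * Ani` (from h3).
  have e3 : Aji * Anj * Aji⁻¹ = Ani⁻¹ * Anj * Ani := by
    calc Aji * Anj * Aji⁻¹ = Ani⁻¹ * (Ani * Aji * Anj) * Aji⁻¹ := by group
      _ = Ani⁻¹ * (Anj * Ani * Aji) * Aji⁻¹ := by rw [h3]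
      _ = Ani⁻¹ * Anj * Ani := by group
  -- Hence `Ani` commutes with `Anl * Anj * Anl⁻¹`.
  have key : Ani⁻¹ * (Anl * Anj * Anl⁻¹) * Ani = Anl * Anj * Anl⁻¹ := by
    calc Ani⁻¹ * (Anl * Anj * Anl⁻¹) * Ani
        = (Ani⁻¹ * Anl * Ani) * (Ani⁻¹ * Anj * Ani) * (Ani⁻¹ * Anl * Ani)⁻¹ := by group
      _ = (Aji * Anl * Aji⁻¹) * (Aji * Anj * Aji⁻¹) * (Aji * Anl * Aji⁻¹)⁻¹ := by
          rw [e2, e3]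
      _ = Aji * (Anl * Anj * Anl⁻¹) * Aji⁻¹ := by group
      _ = ((Anl * Anj * Anl⁻¹) * Aji) * Aji⁻¹ := by rw [hcomm]
      _ = Anl * Anj * Anl⁻¹ := by group
  calc Aji * Anj * Aji⁻¹ = Ani⁻¹ * Anj * Ani := e3
    _ = Ani⁻¹ * Anl⁻¹ * (Anl * Anj * Anl⁻¹) * Anl * Ani := by group
    _ = Ani⁻¹ * Anl⁻¹ * (Ani * (Ani⁻¹ * (Anl * Anj * Anl⁻¹) * Ani) * Ani⁻¹) * Anl * Ani := by
        group
    _ = Ani⁻¹ * Anl⁻¹ * (Ani * (Anl * Anj * Anl⁻¹) * Ani⁻¹) * Anl * Ani := by rw [key]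
    _ = Ani⁻¹ * Anl⁻¹ * Ani * Anl * Anj * Anl⁻¹ * Ani⁻¹ * Anl * Ani := by group
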